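/- arXiv:0810.2750 — 3 statements merged into one kernel-verified Lean document; each statement's English description precedes it below -/
import Mathlib

section
/- Let $w^* : (0, x_0) \to (0,\infty)$ be a nondecreasing function with generalized inverse (distribution function) $D_w$, i.e., $D_w(y) = |\{x \in (0,x_0) : w^*(x) < y\}|$. Then $\int_0^\varepsilon x^{-2} w^*(x)\, dx = \infty$ for some (equivalently, all) $\varepsilon \in (0,x_0)$ if and only if $\int_0^\delta \frac{dy}{D_w(y)} = \infty$ for some (equivalently, all) sufficiently small $\delta > 0$. -/
/-!
For `y > 0` the sublevel set `{w < y}` is, up to a null set, the interval `(0, D_w(y)]`, so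
`1 / D_w(y) = ∫_{D_w(y)}^∞ x⁻² dx = ∫_{(0, x₀) ∩ {w ≥ y}} x⁻² dx + 1 / x₀`.
Integrating over `y ∈ (0, δ)` and exchanging the integrals gives
`∫_0^δ dy / D_w(y) = ∫_0^{x₀} min (w x, δ) x⁻² dx + δ / x₀`.
Away from `0` every integrand here is bounded, so divergence is decided near `0`: there
`min (w, w ε) = w` on `(0, ε)`, and truncations at two levels `δ₁, δ₂` differ at most by the
factor `1 + δ₁ / δ₂`.
-/

open MeasureTheory Set
open scoped ENNReal

lemma lintegral_Ioi_one_div_sq_of_pos {c : ℝ} (hc : 0 < c) :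
    ∫⁻ x in Ioi c, ENNReal.ofReal (1 / x ^ 2) = (ENNReal.ofReal c)⁻¹ := by
  have hrpow : ∀ x ∈ Ioi c, ENNReal.ofReal (1 / x ^ 2) = ENNReal.ofReal (x ^ (-2 : ℝ)) :=
    fun x hx ↦ by simp [Real.rpow_neg (hc.trans hx).le]
  rw [setLIntegral_congr_fun measurableSet_Ioi hrpow,
    ← ofReal_integral_eq_lintegral_ofReal (integrableOn_Ioi_rpow_of_lt (by norm_num) hc)
      (ae_restrict_of_forall_mem measurableSet_Ioi fun x hx ↦
        Real.rpow_nonneg (hc.trans hx).le _),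
    integral_Ioi_rpow_of_lt (by norm_num) hc, ← ENNReal.ofReal_inv_of_pos hc]
  norm_num [Real.rpow_neg_one]

lemma lintegral_Ioi_one_div_sq {c : ℝ} (hc : 0 ≤ c) :
    ∫⁻ x in Ioi c, ENNReal.ofReal (1 / x ^ 2) = (ENNReal.ofReal c)⁻¹ := by
  rcases hc.lt_or_eq with hc | rfl
  · exact lintegral_Ioi_one_div_sq_of_pos hc
  rw [ENNReal.ofReal_zero, ENNReal.inv_zero]
  refine ENNReal.eq_top_of_forall_nnreal_le fun r ↦ ?_
  have hr : (0 : ℝ) < ((r : ℝ) + 1)⁻¹ := by positivity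
  calc (r : ℝ≥0∞) ≤ (ENNReal.ofReal ((r : ℝ) + 1)⁻¹)⁻¹ := by
        rw [← ENNReal.ofReal_inv_of_pos hr, inv_inv, ENNReal.ofReal_add r.coe_nonneg zero_le_one]
        simp
    _ = ∫⁻ x in Ioi ((r : ℝ) + 1)⁻¹, ENNReal.ofReal (1 / x ^ 2) :=
        (lintegral_Ioi_one_div_sq_of_pos hr).symm
    _ ≤ ∫⁻ x in Ioi 0, ENNReal.ofReal (1 / x ^ 2) := lintegral_mono_set (Ioi_subset_Ioi hr.le)

lemma lintegral_Ioc_one_div_sq_add_inv {c b : ℝ} (hc : 0 ≤ c) (hcb : c ≤ b) :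
    (∫⁻ x in Ioc c b, ENNReal.ofReal (1 / x ^ 2)) + (ENNReal.ofReal b)⁻¹ =
      (ENNReal.ofReal c)⁻¹ := by
  rw [← lintegral_Ioi_one_div_sq hc, ← lintegral_Ioi_one_div_sq (hc.trans hcb),
    ← Ioc_union_Ioi_eq_Ioi hcb, lintegral_union measurableSet_Ioi (Ioc_disjoint_Ioi le_rfl)]

lemma ae_eq_Ioc_of_Ioo_subset_of_subset_Icc {s : Set ℝ} {a b : ℝ} (h₁ : Ioo a b ⊆ s)
    (h₂ : s ⊆ Icc a b) : s =ᵐ[volume] Ioc a b :=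
  ((h₂.eventuallyLE.trans Ioo_ae_eq_Icc.symm.le).antisymm h₁.eventuallyLE).trans Ioo_ae_eq_Ioc

lemma volume_Iic_inter_Ioo (a δ : ℝ) :
    volume (Iic a ∩ Ioo 0 δ) = ENNReal.ofReal (min a δ) := by
  have h := ae_eq_Ioc_of_Ioo_subset_of_subset_Icc (s := Iic a ∩ Ioo 0 δ) (a := 0) (b := min a δ)
    (fun x hx ↦ ⟨hx.2.le.trans (min_le_left _ _), hx.1, hx.2.trans_le (min_le_right _ _)⟩)
    (fun x hx ↦ ⟨hx.2.1.le, le_min hx.1 hx.2.2.le⟩)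
  rw [measure_congr h, Real.volume_Ioc, sub_zero]

lemma MonotoneOn.exists_threshold {α β : Type*} [ConditionallyCompleteLinearOrder α]
    [LinearOrder β] {w : α → β} {a b : α} (hw : MonotoneOn w (Ioo a b)) (hab : a ≤ b) (y : β) :
    ∃ c ∈ Icc a b, (∀ x ∈ Ioo a b, x < c → w x < y) ∧ (∀ x ∈ Ioo a b, c < x → y ≤ w x) := by
  set S := insert a {x ∈ Ioo a b | w x < y}
  have hS : ∀ x ∈ S, x ≤ b := by
    rintro x (rfl | hx)
    exacts [hab, hx.1.2.le]
  have hbdd : BddAbove S := ⟨b, hS⟩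
  refine ⟨sSup S, ⟨le_csSup hbdd (mem_insert _ _), csSup_le (insert_nonempty _ _) hS⟩, ?_, ?_⟩
  · intro x hx hxc
    obtain ⟨s, hs | hs, hxs⟩ := exists_lt_of_lt_csSup (insert_nonempty _ _) hxc
    · exact absurd (hs ▸ hxs) hx.1.not_gt
    · exact (hw hx hs.1 hxs.le).trans_lt hs.2
  · intro x hx hcx
    exact not_lt.1 fun h ↦ (le_csSup hbdd (mem_insert_of_mem _ ⟨hx, h⟩)).not_gt hcx

lemma inv_volume_sublevel_eq {x₀ : ℝ} (hx₀ : 0 ≤ x₀) {w : ℝ → ℝ} (hw : MonotoneOn w (Ioo 0 x₀))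
    (y : ℝ) :
    (volume {x ∈ Ioo 0 x₀ | w x < y})⁻¹ =
      (∫⁻ x in {x | y ≤ w x}, ENNReal.ofReal (1 / x ^ 2) ∂volume.restrict (Ioo 0 x₀)) +
        (ENNReal.ofReal x₀)⁻¹ := by
  obtain ⟨c, hc, hlow, hup⟩ := hw.exists_threshold hx₀ y
  have hS : {x ∈ Ioo 0 x₀ | w x < y} =ᵐ[volume] Ioc 0 c :=
    ae_eq_Ioc_of_Ioo_subset_of_subset_Icc
      (fun x hx ↦ ⟨⟨hx.1, hx.2.trans_le hc.2⟩, hlow x ⟨hx.1, hx.2.trans_le hc.2⟩ hx.2⟩)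
      (fun x hx ↦ ⟨hx.1.1.le, not_lt.1 fun h ↦ (hup x hx.1 h).not_gt hx.2⟩)
  have hT : ({x | y ≤ w x} ∩ Ioo 0 x₀ : Set ℝ) =ᵐ[volume] Ioc c x₀ :=
    ae_eq_Ioc_of_Ioo_subset_of_subset_Icc
      (fun x hx ↦ ⟨hup x ⟨hc.1.trans_lt hx.1, hx.2⟩ hx.1, hc.1.trans_lt hx.1, hx.2⟩)
      (fun x hx ↦ ⟨not_lt.1 fun h ↦ (hlow x hx.2 h).not_ge hx.1, hx.2.2.le⟩)
  rw [Measure.restrict_restrict' measurableSet_Ioo, setLIntegral_congr hT, measure_congr hS,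
    Real.volume_Ioc, sub_zero, lintegral_Ioc_one_div_sq_add_inv hc.1 hc.2]

lemma lintegral_Ioo_setLIntegral_setOf_le_of_measurable {α : Type*} [MeasurableSpace α]
    {μ : Measure α} [SFinite μ] {g : α → ℝ} (hg : Measurable g) {f : α → ℝ≥0∞}
    (hf : Measurable f) (δ : ℝ) :
    ∫⁻ y in Ioo 0 δ, ∫⁻ x in {x | y ≤ g x}, f x ∂μ =
      ∫⁻ x, f x * ENNReal.ofReal (min (g x) δ) ∂μ := by
  let F : ℝ → α → ℝ≥0∞ := fun y x ↦ if y ≤ g x then f x else 0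
  have hF : Measurable (Function.uncurry F) :=
    Measurable.ite (measurableSet_le measurable_fst (hg.comp measurable_snd))
      (hf.comp measurable_snd) measurable_const
  have hx : ∀ y, ∫⁻ x in {x | y ≤ g x}, f x ∂μ = ∫⁻ x, F y x ∂μ := fun y ↦ by
    rw [← lintegral_indicator (measurableSet_le measurable_const hg)]
    rfl
  have hy : ∀ x, ∫⁻ y in Ioo 0 δ, F y x = f x * ENNReal.ofReal (min (g x) δ) := fun x ↦ by
    rw [← volume_Iic_inter_Ioo, ← Measure.restrict_apply measurableSet_Iic,
      ← lintegral_indicator_const measurableSet_Iic]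
    rfl
  simp_rw [hx, ← hy]
  exact lintegral_lintegral_swap hF.aemeasurable

lemma lintegral_Ioo_setLIntegral_setOf_le {α : Type*} [MeasurableSpace α]
    {μ : Measure α} [SFinite μ] {g : α → ℝ} (hg : AEMeasurable g μ) {f : α → ℝ≥0∞}
    (hf : Measurable f) (δ : ℝ) :
    ∫⁻ y in Ioo 0 δ, ∫⁻ x in {x | y ≤ g x}, f x ∂μ =
      ∫⁻ x, f x * ENNReal.ofReal (min (g x) δ) ∂μ :=
  calc ∫⁻ y in Ioo 0 δ, ∫⁻ x in {x | y ≤ g x}, f x ∂μ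
      = ∫⁻ y in Ioo 0 δ, ∫⁻ x in {x | y ≤ hg.mk g x}, f x ∂μ :=
        lintegral_congr fun y ↦ setLIntegral_congr <|
          hg.ae_eq_mk.mono fun x hx ↦ congrArg (y ≤ ·) hx
    _ = ∫⁻ x, f x * ENNReal.ofReal (min (hg.mk g x) δ) ∂μ :=
        lintegral_Ioo_setLIntegral_setOf_le_of_measurable hg.measurable_mk hf δ
    _ = ∫⁻ x, f x * ENNReal.ofReal (min (g x) δ) ∂μ :=
        lintegral_congr_ae <| hg.ae_eq_mk.mono fun x hx ↦ by simp only [hx]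

lemma lintegral_inv_volume_sublevel {x₀ : ℝ} (hx₀ : 0 ≤ x₀) {w : ℝ → ℝ}
    (hw : MonotoneOn w (Ioo 0 x₀)) (δ : ℝ) :
    ∫⁻ y in Ioo 0 δ, (volume {x ∈ Ioo 0 x₀ | w x < y})⁻¹ =
      (∫⁻ x in Ioo 0 x₀, ENNReal.ofReal (min (w x) δ / x ^ 2)) +
        ENNReal.ofReal δ * (ENNReal.ofReal x₀)⁻¹ := by
  simp_rw [inv_volume_sublevel_eq hx₀ hw]
  rw [lintegral_add_right _ measurable_const, setLIntegral_const, Real.volume_Ioo, sub_zero,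
    lintegral_Ioo_setLIntegral_setOf_le (aemeasurable_restrict_of_monotoneOn measurableSet_Ioo hw)
      (by fun_prop) δ, mul_comm]
  congr 1
  refine lintegral_congr fun x ↦ ?_
  rw [← ENNReal.ofReal_mul (by positivity)]
  congr 1
  ring

lemma lintegral_inv_volume_sublevel_eq_top_iff {x₀ : ℝ} (hx₀ : 0 < x₀) {w : ℝ → ℝ}
    (hw : MonotoneOn w (Ioo 0 x₀)) (δ : ℝ) :
    ∫⁻ y in Ioo 0 δ, (volume {x ∈ Ioo 0 x₀ | w x < y})⁻¹ = ⊤ ↔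
      ∫⁻ x in Ioo 0 x₀, ENNReal.ofReal (min (w x) δ / x ^ 2) = ⊤ := by
  rw [lintegral_inv_volume_sublevel hx₀.le hw, ENNReal.add_eq_top,
    or_iff_left (ENNReal.mul_ne_top ENNReal.ofReal_ne_top
      (ENNReal.inv_ne_top.2 (ENNReal.ofReal_pos.2 hx₀).ne'))]

lemma lintegral_Ioo_div_sq_eq_top_of_le_on_Ico {f : ℝ → ℝ} {a b C : ℝ} (ha : 0 < a)
    (hf : ∀ x ∈ Ico a b, f x ≤ C) (h : ∫⁻ x in Ioo 0 b, ENNReal.ofReal (f x / x ^ 2) = ⊤) :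
    ∫⁻ x in Ioo 0 a, ENNReal.ofReal (f x / x ^ 2) = ⊤ := by
  have htail : ∫⁻ x in Ico a b, ENNReal.ofReal (f x / x ^ 2) ≠ ⊤ := by
    refine ne_top_of_le_ne_top (b := ∫⁻ _ in Ico a b, ENNReal.ofReal (max C 0 / a ^ 2)) ?_
      (setLIntegral_mono' measurableSet_Ico fun x hx ↦ ENNReal.ofReal_le_ofReal ?_)
    · rw [setLIntegral_const, Real.volume_Ico]
      exact ENNReal.mul_ne_top ENNReal.ofReal_ne_top ENNReal.ofReal_ne_top
    · calc f x / x ^ 2 ≤ max C 0 / x ^ 2 := by gcongr; exact le_max_of_le_left (hf x hx)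
        _ ≤ max C 0 / a ^ 2 := by gcongr; exact hx.1
  have hsplit : ∫⁻ x in Ioo 0 b, ENNReal.ofReal (f x / x ^ 2) ≤
      (∫⁻ x in Ioo 0 a, ENNReal.ofReal (f x / x ^ 2)) +
        ∫⁻ x in Ico a b, ENNReal.ofReal (f x / x ^ 2) :=
    (lintegral_mono_set Ioo_subset_Ioo_union_Ico).trans (lintegral_union_le _ _ _)
  by_contra hne
  exact (ENNReal.add_ne_top.2 ⟨hne, htail⟩) (top_le_iff.1 (h ▸ hsplit))

lemma MonotoneOn.lintegral_div_sq_eq_top_of_eq_top {x₀ ε₁ ε₂ : ℝ} {w : ℝ → ℝ}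
    (hw : MonotoneOn w (Ioo 0 x₀)) (hε₁ : ε₁ ∈ Ioo 0 x₀) (hε₂ : ε₂ ∈ Ioo 0 x₀)
    (h : ∫⁻ x in Ioo 0 ε₁, ENNReal.ofReal (w x / x ^ 2) = ⊤) :
    ∫⁻ x in Ioo 0 ε₂, ENNReal.ofReal (w x / x ^ 2) = ⊤ := by
  rcases le_or_gt ε₁ ε₂ with hle | hlt
  · exact top_unique (h ▸ lintegral_mono_set (Ioo_subset_Ioo_right hle))
  · refine lintegral_Ioo_div_sq_eq_top_of_le_on_Ico (C := w ε₁) hε₂.1 (fun x hx ↦ ?_) h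
    exact hw ⟨hε₂.1.trans_le hx.1, hx.2.trans hε₁.2⟩ hε₁ hx.2.le

lemma MonotoneOn.lintegral_min_div_sq_eq_top {x₀ ε : ℝ} {w : ℝ → ℝ}
    (hw : MonotoneOn w (Ioo 0 x₀)) (hε : ε ∈ Ioo 0 x₀)
    (h : ∫⁻ x in Ioo 0 ε, ENNReal.ofReal (w x / x ^ 2) = ⊤) :
    ∫⁻ x in Ioo 0 x₀, ENNReal.ofReal (min (w x) (w ε) / x ^ 2) = ⊤ := by
  have hmin : ∀ x ∈ Ioo 0 ε, min (w x) (w ε) = w x := fun x hx ↦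
    min_eq_left (hw ⟨hx.1, hx.2.trans hε.2⟩ hε hx.2.le)
  refine top_unique ?_
  calc ⊤ = ∫⁻ x in Ioo 0 ε, ENNReal.ofReal (w x / x ^ 2) := h.symm
    _ = ∫⁻ x in Ioo 0 ε, ENNReal.ofReal (min (w x) (w ε) / x ^ 2) :=
        setLIntegral_congr_fun measurableSet_Ioo fun x hx ↦ by rw [hmin x hx]
    _ ≤ _ := lintegral_mono_set (Ioo_subset_Ioo_right hε.2.le)

lemma lintegral_div_sq_eq_top_of_lintegral_min {x₀ ε δ : ℝ} {w : ℝ → ℝ} (hε : ε ∈ Ioo 0 x₀)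
    (h : ∫⁻ x in Ioo 0 x₀, ENNReal.ofReal (min (w x) δ / x ^ 2) = ⊤) :
    ∫⁻ x in Ioo 0 ε, ENNReal.ofReal (w x / x ^ 2) = ⊤ := by
  have hmin := lintegral_Ioo_div_sq_eq_top_of_le_on_Ico hε.1 (fun x _ ↦ min_le_right _ _) h
  refine top_unique (hmin ▸ setLIntegral_mono' measurableSet_Ioo fun x hx ↦ ?_)
  have hx₀ : 0 < x := hx.1
  gcongr
  exact min_le_left _ _

lemma min_le_mul_min {a δ₁ δ₂ : ℝ} (ha : 0 ≤ a) (hδ₁ : 0 ≤ δ₁) (hδ₂ : 0 < δ₂) :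
    min a δ₁ ≤ (1 + δ₁ / δ₂) * min a δ₂ := by
  rcases le_total a δ₂ with h | h
  · rw [min_eq_left h]
    nlinarith [min_le_left a δ₁, div_nonneg hδ₁ hδ₂.le]
  · rw [min_eq_right h, add_mul, div_mul_cancel₀ _ hδ₂.ne']
    linarith [min_le_right a δ₁]

lemma lintegral_min_div_sq_eq_top_of_eq_top {μ : Measure ℝ} {w : ℝ → ℝ}
    (hw : ∀ᵐ x ∂μ, 0 ≤ w x) {δ₁ δ₂ : ℝ} (hδ₁ : 0 ≤ δ₁) (hδ₂ : 0 < δ₂)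
    (h : ∫⁻ x, ENNReal.ofReal (min (w x) δ₁ / x ^ 2) ∂μ = ⊤) :
    ∫⁻ x, ENNReal.ofReal (min (w x) δ₂ / x ^ 2) ∂μ = ⊤ := by
  have hle : ∫⁻ x, ENNReal.ofReal (min (w x) δ₁ / x ^ 2) ∂μ ≤
      ENNReal.ofReal (1 + δ₁ / δ₂) * ∫⁻ x, ENNReal.ofReal (min (w x) δ₂ / x ^ 2) ∂μ := by
    rw [← lintegral_const_mul' _ _ ENNReal.ofReal_ne_top]
    refine lintegral_mono_ae (hw.mono fun x hx ↦ ?_)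
    rw [← ENNReal.ofReal_mul (by positivity), ← mul_div_assoc]
    gcongr
    exact min_le_mul_min hx hδ₁ hδ₂
  by_contra hne
  exact ENNReal.mul_ne_top ENNReal.ofReal_ne_top hne (top_le_iff.1 (h ▸ hle))

/-- For a nondecreasing `w* : (0,x₀) → (0,∞)` with distribution function
`D_w(y) = |{x ∈ (0,x₀) : w*(x) < y}|`, the condition `∫_0^ε x⁻² w*(x) dx = ∞`
(for some, equivalently all, `ε ∈ (0,x₀)`) is equivalent to
`∫_0^δ dy/D_w(y) = ∞` (for some, equivalently all, sufficiently small `δ > 0`). -/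
theorem stmt_9 (x₀ : ℝ) (hx₀ : 0 < x₀) (w : ℝ → ℝ)
    (hmono : MonotoneOn w (Set.Ioo 0 x₀)) (hpos : ∀ x ∈ Set.Ioo 0 x₀, 0 < w x) :
    ((∃ ε ∈ Set.Ioo 0 x₀,
        ∫⁻ x in Set.Ioo 0 ε, ENNReal.ofReal (w x / x ^ 2) = ⊤) ↔
      (∀ ε ∈ Set.Ioo 0 x₀,
        ∫⁻ x in Set.Ioo 0 ε, ENNReal.ofReal (w x / x ^ 2) = ⊤)) ∧
    ((∃ ε ∈ Set.Ioo 0 x₀,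
        ∫⁻ x in Set.Ioo 0 ε, ENNReal.ofReal (w x / x ^ 2) = ⊤) ↔
      (∃ δ > 0,
        ∫⁻ y in Set.Ioo 0 δ, (volume {x ∈ Set.Ioo 0 x₀ | w x < y})⁻¹ = ⊤)) ∧
    ((∃ δ > 0,
        ∫⁻ y in Set.Ioo 0 δ, (volume {x ∈ Set.Ioo 0 x₀ | w x < y})⁻¹ = ⊤) ↔
      (∀ δ > 0, δ ≤ x₀ →
        ∫⁻ y in Set.Ioo 0 δ, (volume {x ∈ Set.Ioo 0 x₀ | w x < y})⁻¹ = ⊤)) := by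
  have hhalf : x₀ / 2 ∈ Ioo 0 x₀ := ⟨half_pos hx₀, half_lt_self hx₀⟩
  have hD := lintegral_inv_volume_sublevel_eq_top_iff hx₀ hmono
  have hnonneg : ∀ᵐ x ∂volume.restrict (Ioo 0 x₀), 0 ≤ w x :=
    ae_restrict_of_forall_mem measurableSet_Ioo fun x hx ↦ (hpos x hx).le
  refine ⟨⟨?_, fun h ↦ ⟨x₀ / 2, hhalf, h _ hhalf⟩⟩, ⟨?_, ?_⟩, ⟨?_, ?_⟩⟩
  · rintro ⟨ε, hε, h⟩ ε' hε'
    exact hmono.lintegral_div_sq_eq_top_of_eq_top hε hε' h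
  · rintro ⟨ε, hε, h⟩
    exact ⟨w ε, hpos ε hε, (hD _).2 (hmono.lintegral_min_div_sq_eq_top hε h)⟩
  · rintro ⟨δ, -, h⟩
    exact ⟨x₀ / 2, hhalf, lintegral_div_sq_eq_top_of_lintegral_min hhalf ((hD δ).1 h)⟩
  · rintro ⟨δ, hδ, h⟩ δ' hδ' -
    exact (hD δ').2 (lintegral_min_div_sq_eq_top_of_eq_top hnonneg hδ.le hδ' ((hD δ).1 h))
  · exact fun h ↦ ⟨x₀, hx₀, h x₀ hx₀ le_rfl⟩
end

section
/- Let $\mu$ be a finite compactly supported Borel measure on $\mathbb{R}$, $\alpha \in \mathbb{R}$, $A = M_t$ multiplication by $t$ on $L^2(\mu)$, $A_\alpha = A + \alpha(\cdot,\mathbf{1})\mathbf{1}$, and let $V_\alpha : L^2(\mu) \to L^2(\mu_\alpha)$ be a unitary with $V_\alpha A_\alpha = M_s V_\alpha$ and $V_\alpha \mathbf{1} = \mathbf{1}$. Then for every $n \in \mathbb{N}$, $V_\alpha M_t^n = M_s^n V_\alpha - \alpha \sum_{k=0}^{n-1} (\cdot, t^k)_{L^2(\mu)}\, s^{n-k-1}$,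 and consequently $(V_\alpha t^n)(s) = s^n - \alpha \int_{\mathbb{R}} \frac{s^n - t^n}{s-t}\, d\mu(t)$. -/
open MeasureTheory Finset
open scoped ENNReal

/-!
Because `μ` has bounded support, every `t ^ n * f` with `f ∈ L²(μ)` lies in `L²(μ)`. Applying the
intertwining relation to `g = t ^ n * f` and using `V 1 = 1` gives the one-step identity
`V (t g) = s · V g - α (∫ g dμ)`, i.e. `V M_t = M_s V - α (·, 1) 1`. Iterating it yields the
formula for `V M_t ^ n`, and `f = 1` gives the formula for `V t ^ n`.
-/

theorem Finset.sum_range_succ_mul_pow_sub {R : Type*} [CommSemiring R] (c : ℕ → R) (s : R)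
    (n : ℕ) :
    ∑ k ∈ range (n + 1), c k * s ^ (n + 1 - k - 1)
      = s * ∑ k ∈ range n, c k * s ^ (n - k - 1) + c n := by
  rw [sum_range_succ, mul_sum, show n + 1 - n - 1 = 0 by omega, pow_zero, mul_one]
  congr 1
  refine sum_congr rfl fun k hk => ?_
  rw [show n + 1 - k - 1 = n - k - 1 + 1 by grind, pow_succ]
  ring

namespace MeasureTheory

variable {μ ν : Measure ℝ} {p : ℝ≥0∞}

theorem MemLp.id_mul_of_isBounded_support (hμ : ∃ s : Set ℝ, Bornology.IsBounded s ∧ μ sᶜ = 0)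
    {f : ℝ → ℝ} (hf : MemLp f p μ) : MemLp (fun t => t * f t) p μ := by
  obtain ⟨s, hs, hsc⟩ := hμ
  obtain ⟨C, hC⟩ := hs.exists_norm_le
  refine hf.of_le_mul (c := C) (aestronglyMeasurable_id.mul hf.1) ?_
  filter_upwards [measure_eq_zero_iff_ae_notMem.mp hsc] with t ht
  rw [norm_mul]
  exact mul_le_mul_of_nonneg_right (hC t (not_not.mp ht)) (norm_nonneg _)

theorem MemLp.pow_mul_of_isBounded_support (hμ : ∃ s : Set ℝ, Bornology.IsBounded s ∧ μ sᶜ = 0)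
    {f : ℝ → ℝ} (hf : MemLp f p μ) (n : ℕ) : MemLp (fun t => t ^ n * f t) p μ := by
  induction n with
  | zero => simpa using hf
  | succ n ih =>
    simpa only [pow_succ', mul_assoc] using ih.id_mul_of_isBounded_support hμ

theorem integrable_pow_of_isBounded_support [IsFiniteMeasure μ]
    (hμ : ∃ s : Set ℝ, Bornology.IsBounded s ∧ μ sᶜ = 0) (n : ℕ) :
    Integrable (fun t : ℝ => t ^ n) μ := by
  simpa [memLp_one_iff_integrable] using
    (memLp_const (μ := μ) (p := 1) (1 : ℝ)).pow_mul_of_isBounded_support hμ n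

variable {F : Type*} [FunLike F (Lp ℝ p μ) (Lp ℝ p ν)] [LinearMapClass F ℝ (Lp ℝ p μ) (Lp ℝ p ν)]
  (α : ℝ) (V : F)

theorem apply_id_mul_ae_eq_of_intertwines
    (hinter : ∀ (f : ℝ → ℝ) (hf : MemLp f p μ)
      (hAf : MemLp (fun t => t * f t + α * ∫ t', f t' ∂μ) p μ),
      (V (hAf.toLp _) : ℝ → ℝ) =ᵐ[ν] fun s => s * (V (hf.toLp f) : ℝ → ℝ) s)
    (h1 : MemLp (fun _ : ℝ => (1 : ℝ)) p μ)
    (hV1 : (V (h1.toLp _) : ℝ → ℝ) =ᵐ[ν] fun _ => (1 : ℝ))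
    {g : ℝ → ℝ} (hg : MemLp g p μ) (htg : MemLp (fun t => t * g t) p μ) :
    (V (htg.toLp _) : ℝ → ℝ) =ᵐ[ν] fun s =>
      s * (V (hg.toLp g) : ℝ → ℝ) s - α * ∫ t, g t ∂μ := by
  set c := α * ∫ t, g t ∂μ
  have hc : MemLp (fun _ => c) p μ := by simpa using h1.const_mul c
  have hAg : MemLp (fun t => t * g t + c) p μ := htg.add hc
  have hsplit : hAg.toLp _ = htg.toLp _ + c • h1.toLp _ := by
    rw [← MemLp.toLp_const_smul, ← MemLp.toLp_add]
    exact MemLp.toLp_congr _ _ (.of_forall fun t => by simp)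
  have hVsplit : (V (hAg.toLp _) : ℝ → ℝ) =ᵐ[ν] V (htg.toLp _) + c • V (h1.toLp _) := by
    rw [hsplit, map_add, map_smul]
    filter_upwards [Lp.coeFn_add (V (htg.toLp _)) (c • V (h1.toLp _)),
      Lp.coeFn_smul c (V (h1.toLp _))] with s hadd hsmul
    simp only [hadd, hsmul, Pi.add_apply]
  filter_upwards [hinter g hg hAg, hVsplit, hV1] with s hA hsplit_s hone
  simp only [Pi.add_apply, Pi.smul_apply, smul_eq_mul, hone] at hsplit_s
  linarith

theorem apply_pow_mul_ae_eq_of_intertwines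
    (hμ : ∃ s : Set ℝ, Bornology.IsBounded s ∧ μ sᶜ = 0)
    (hinter : ∀ (f : ℝ → ℝ) (hf : MemLp f p μ)
      (hAf : MemLp (fun t => t * f t + α * ∫ t', f t' ∂μ) p μ),
      (V (hAf.toLp _) : ℝ → ℝ) =ᵐ[ν] fun s => s * (V (hf.toLp f) : ℝ → ℝ) s)
    (h1 : MemLp (fun _ : ℝ => (1 : ℝ)) p μ)
    (hV1 : (V (h1.toLp _) : ℝ → ℝ) =ᵐ[ν] fun _ => (1 : ℝ))
    (n : ℕ) {f : ℝ → ℝ} (hf : MemLp f p μ) (htf : MemLp (fun t => t ^ n * f t) p μ) :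
    (V (htf.toLp _) : ℝ → ℝ) =ᵐ[ν] fun s =>
      s ^ n * (V (hf.toLp f) : ℝ → ℝ) s
        - α * ∑ k ∈ range n, (∫ t, f t * t ^ k ∂μ) * s ^ (n - k - 1) := by
  induction n with
  | zero =>
    rw [MemLp.toLp_congr htf hf (.of_forall fun t => by simp)]
    exact .of_forall fun s => by simp
  | succ n ih =>
    have hg := hf.pow_mul_of_isBounded_support hμ n
    have htg := hg.id_mul_of_isBounded_support hμ
    rw [MemLp.toLp_congr htf htg (.of_forall fun t => by ring)]
    filter_upwards [apply_id_mul_ae_eq_of_intertwines α V hinter h1 hV1 hg htg, ih hg]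
      with s hstep hpow
    rw [hstep, hpow, sum_range_succ_mul_pow_sub]
    simp only [pow_succ, mul_comm (f _)]
    ring

end MeasureTheory

theorem stmt_13_general (μ ν : Measure ℝ) [IsFiniteMeasure μ]
    (hbμ : ∃ s : Set ℝ, Bornology.IsBounded s ∧ μ sᶜ = 0)
    (α : ℝ)
    (V : Lp ℝ 2 μ ≃ₗᵢ[ℝ] Lp ℝ 2 ν)
    (hinter : ∀ (f : ℝ → ℝ) (hf : MemLp f 2 μ)
      (hAf : MemLp (fun t => t * f t + α * ∫ t', f t' ∂μ) 2 μ),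
      (V (hAf.toLp _) : ℝ → ℝ) =ᵐ[ν] fun s => s * (V (hf.toLp f) : ℝ → ℝ) s)
    (h1 : MemLp (fun _ : ℝ => (1 : ℝ)) 2 μ)
    (hV1 : (V (h1.toLp _) : ℝ → ℝ) =ᵐ[ν] fun _ => (1 : ℝ)) :
    (∀ (n : ℕ) (f : ℝ → ℝ) (hf : MemLp f 2 μ)
        (htf : MemLp (fun t => t ^ n * f t) 2 μ),
      (V (htf.toLp _) : ℝ → ℝ) =ᵐ[ν] fun s =>
        s ^ n * (V (hf.toLp f) : ℝ → ℝ) s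
          - α * ∑ k ∈ Finset.range n, (∫ t, f t * t ^ k ∂μ) * s ^ (n - k - 1)) ∧
    (∀ (n : ℕ) (hn : MemLp (fun t : ℝ => t ^ n) 2 μ),
      (V (hn.toLp _) : ℝ → ℝ) =ᵐ[ν] fun s =>
        s ^ n - α * ∫ t, (∑ k ∈ Finset.range n, t ^ k * s ^ (n - k - 1)) ∂μ) := by
  have hpow_mul := apply_pow_mul_ae_eq_of_intertwines α V hbμ
    hinter h1 hV1
  refine ⟨fun n f hf htf => hpow_mul n hf htf, fun n hn => ?_⟩
  have htn : MemLp (fun t : ℝ => t ^ n * 1) 2 μ := by simpa using hn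
  rw [MemLp.toLp_congr hn htn (.of_forall fun t => by simp)]
  filter_upwards [hpow_mul n h1 htn, hV1] with s hs hone
  rw [hs, hone, integral_finsetSum _ fun k _ =>
    (integrable_pow_of_isBounded_support hbμ k).mul_const _]
  simp [integral_mul_const]

/-- If `V_α : L²(μ) → L²(μ_α)` is unitary, intertwines `A_α = M_t + α(·,1)1` with `M_s`,
and sends `1` to `1`, then `V_α M_t^n = M_s^n V_α - α ∑_{k=0}^{n-1} (·, t^k) s^{n-k-1}`,
and consequently `(V_α t^n)(s) = s^n - α ∫ (s^n - t^n)/(s - t) dμ(t)`, where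
`(s^n - t^n)/(s-t) = ∑_{k=0}^{n-1} t^k s^{n-k-1}`. -/
theorem stmt_13 (μ ν : Measure ℝ) [IsFiniteMeasure μ] [IsFiniteMeasure ν]
    (hbμ : ∃ s : Set ℝ, Bornology.IsBounded s ∧ μ sᶜ = 0)
    (hbν : ∃ s : Set ℝ, Bornology.IsBounded s ∧ ν sᶜ = 0)
    (α : ℝ)
    (V : Lp ℝ 2 μ ≃ₗᵢ[ℝ] Lp ℝ 2 ν)
    (hinter : ∀ (f : ℝ → ℝ) (hf : MemLp f 2 μ)
      (hAf : MemLp (fun t => t * f t + α * ∫ t', f t' ∂μ) 2 μ),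
      (V (hAf.toLp _) : ℝ → ℝ) =ᵐ[ν] fun s => s * (V (hf.toLp f) : ℝ → ℝ) s)
    (h1 : MemLp (fun _ : ℝ => (1 : ℝ)) 2 μ)
    (hV1 : (V (h1.toLp _) : ℝ → ℝ) =ᵐ[ν] fun _ => (1 : ℝ)) :
    (∀ (n : ℕ) (f : ℝ → ℝ) (hf : MemLp f 2 μ)
        (htf : MemLp (fun t => t ^ n * f t) 2 μ),
      (V (htf.toLp _) : ℝ → ℝ) =ᵐ[ν] fun s =>
        s ^ n * (V (hf.toLp f) : ℝ → ℝ) s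
          - α * ∑ k ∈ Finset.range n, (∫ t, f t * t ^ k ∂μ) * s ^ (n - k - 1)) ∧
    (∀ (n : ℕ) (hn : MemLp (fun t : ℝ => t ^ n) 2 μ),
      (V (hn.toLp _) : ℝ → ℝ) =ᵐ[ν] fun s =>
        s ^ n - α * ∫ t, (∑ k ∈ Finset.range n, t ^ k * s ^ (n - k - 1)) ∂μ) :=
  stmt_13_general μ ν hbμ α V hinter h1 hV1
end

section
/- Let $\mu$ and $\nu$ be measures on $\mathbb{R}$ with $\int (1+|x|)^{-1} d\mu(x) < \infty$ and $\int (1+|x|)^{-2} d\nu(x) < \infty$, and let $V : L^2(\mu) \to L^2(\nu)$ be a bounded operator. Suppose $f_n \in L^2(\mu) \cap L^2(\nu) \cap C^1(\mathbb{R})$ satisfy: (i) for each $n$, $(V f_n)(s) = f_n(s) - \alpha \int \frac{f_n(s) - f_n(t)}{s-t} d\mu(t)$ $\nu$-a.e.; (ii) $f_n \to f$ both $\mu$-a.e. and $\nu$-a.e.; (iii) $|f_n(x)| \le C/(1+|x|)$ uniformly in $n$; and (iv) $|f_n'(x)| \le C$ uniformly in $n$. Then $f \in L^2(\mu)$ and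 $(Vf)(s) = f(s) - \alpha \int \frac{f(s)-f(t)}{s-t}\, d\mu(t)$ $\nu$-a.e. -/
/-! The decay bound `|f_n x| ≤ C / (1 + |x|)` is a common dominating function, and it lies in
`L²(μ)` because `(1 + |x|)⁻² ≤ (1 + |x|)⁻¹`. Hence `f ∈ L²(μ)` and `f_n → f` in `L²(μ)` by dominated
convergence, so `V f_n → V f` in `L²(ν)` and along a subsequence `ν`-a.e. For fixed `s` the
difference quotients are dominated by `2C(2 + |s|) / (1 + |t|)` (the Lipschitz bound near `t = s`,
the decay bound away from it), which is `μ`-integrable, so the right-hand sides of the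
representation converge wherever `f_n s → f s`. The two limits agree `ν`-a.e. -/

open MeasureTheory Filter Topology
open scoped ENNReal

lemma abs_sub_div_sub_le_of_decay {g : ℝ → ℝ} {C : ℝ}
    (hlip : ∀ a b, |g a - g b| ≤ C * |a - b|) (hdecay : ∀ x, |g x| ≤ C / (1 + |x|))
    (s t : ℝ) : |(g s - g t) / (s - t)| ≤ 2 * C * (2 + |s|) / (1 + |t|) := by
  have hC : 0 ≤ C := by simpa using (abs_nonneg _).trans (hdecay 0)
  rcases eq_or_ne s t with rfl | hst
  · simp only [sub_self, div_zero, abs_zero]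
    positivity
  have hd : 0 < |s - t| := abs_pos.2 (sub_ne_zero.2 hst)
  have ht : 1 + |t| ≤ 1 + |s| + |s - t| := by
    linarith [abs_sub_abs_le_abs_sub t s, abs_sub_comm t s]
  rw [abs_div, div_le_div_iff₀ hd (by positivity)]
  rcases le_total |s - t| 1 with hnear | hfar
  · calc |g s - g t| * (1 + |t|) ≤ C * |s - t| * (2 + |s|) :=
          mul_le_mul (hlip s t) (by linarith) (by positivity) (by positivity)
      _ ≤ 2 * C * (2 + |s|) * |s - t| := by
          nlinarith [mul_nonneg (mul_nonneg hC hd.le) (by positivity : (0:ℝ) ≤ 2 + |s|)]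
  · have hnum : |g s - g t| ≤ 2 * C := by
      have hs := (hdecay s).trans (div_le_self hC (by linarith [abs_nonneg s]))
      have ht := (hdecay t).trans (div_le_self hC (by linarith [abs_nonneg t]))
      linarith [abs_sub (g s) (g t)]
    calc |g s - g t| * (1 + |t|) ≤ 2 * C * (1 + |s| + |s - t|) :=
          mul_le_mul hnum ht (by positivity) (by positivity)
      _ ≤ 2 * C * (2 + |s|) * |s - t| := by
          nlinarith [mul_nonneg (mul_nonneg hC (sub_nonneg.2 hfar)) (by positivity : (0:ℝ) ≤ 1 + |s|)]

lemma memLp_two_inv_one_add_abs {μ : Measure ℝ} (hμ : Integrable (fun x => (1 + |x|)⁻¹) μ) :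
    MemLp (fun x : ℝ => (1 + |x|)⁻¹) 2 μ := by
  refine (memLp_two_iff_integrable_sq hμ.aestronglyMeasurable).2 <|
    hμ.mono' (by fun_prop) (Eventually.of_forall fun x => ?_)
  have h : (1 + |x|)⁻¹ ≤ 1 := inv_le_one_of_one_le₀ (by linarith [abs_nonneg x])
  rw [Real.norm_eq_abs, abs_of_nonneg (by positivity)]
  nlinarith [inv_pos.2 (by positivity : (0:ℝ) < 1 + |x|)]

lemma memLp_two_of_abs_le_div_one_add_abs {μ : Measure ℝ}
    (hμ : Integrable (fun x => (1 + |x|)⁻¹) μ) {g : ℝ → ℝ} {C : ℝ}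
    (hg : AEStronglyMeasurable g μ) (hdecay : ∀ᵐ x ∂μ, |g x| ≤ C / (1 + |x|)) :
    MemLp g 2 μ := by
  refine ((memLp_two_inv_one_add_abs hμ).const_mul C).of_le hg ?_
  filter_upwards [hdecay] with x hx
  simp only [Real.norm_eq_abs]
  calc |g x| ≤ |C / (1 + |x|)| := hx.trans (le_abs_self _)
    _ = |C * (1 + |x|)⁻¹| := by rw [div_eq_mul_inv]

theorem Lp.ae_eq_of_tendsto_of_tendsto_ae {α E : Type*} [MeasurableSpace α]
    [NormedAddCommGroup E] {p : ℝ≥0∞} [Fact (1 ≤ p)] {ν : Measure α}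
    {F : ℕ → Lp E p ν} {F₀ : Lp E p ν} (hF : Tendsto F atTop (𝓝 F₀))
    {g : ℕ → α → E} {g₀ : α → E} (hFg : ∀ n, F n =ᵐ[ν] g n)
    (hg : ∀ᵐ x ∂ν, Tendsto (fun n => g n x) atTop (𝓝 (g₀ x))) : F₀ =ᵐ[ν] g₀ := by
  obtain ⟨ns, hns, hae⟩ := (tendstoInMeasure_of_tendsto_Lp hF).exists_seq_tendsto_ae
  filter_upwards [hae, ae_all_iff.2 hFg, hg] with x hFx hFgx hgx
  exact tendsto_nhds_unique (hFx.congr fun k => hFgx (ns k)) (hgx.comp hns.tendsto_atTop)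
theorem tendsto_eLpNorm_sub_of_dominated {α E : Type*} [MeasurableSpace α]
    [NormedAddCommGroup E] {μ : Measure α} {p : ℝ≥0∞} (hp : p ≠ ∞)
    {F : ℕ → α → E} {f : α → E} {bound : α → ℝ}
    (hF : ∀ n, AEStronglyMeasurable (F n) μ) (hbound : MemLp bound p μ)
    (h_le : ∀ n, ∀ᵐ x ∂μ, ‖F n x‖ ≤ bound x)
    (hlim : ∀ᵐ x ∂μ, Tendsto (fun n => F n x) atTop (𝓝 (f x))) :
    Tendsto (fun n => eLpNorm (F n - f) p μ) atTop (𝓝 0) := by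
  rcases eq_or_ne p 0 with rfl | hp0
  · simp
  have hr : 0 < p.toReal := ENNReal.toReal_pos hp0 hp
  have hf : AEStronglyMeasurable f μ := aestronglyMeasurable_of_tendsto_ae atTop hF hlim
  have hf_le : ∀ᵐ x ∂μ, ‖f x‖ ≤ bound x := by
    filter_upwards [hlim, ae_all_iff.2 h_le] with x hx hxle
    exact le_of_tendsto hx.norm (Eventually.of_forall hxle)
  have hint : Tendsto (fun n => ∫⁻ x, ‖F n x - f x‖ₑ ^ p.toReal ∂μ) atTop (𝓝 0) := by
    have h := tendsto_lintegral_of_dominated_convergence'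
      (F := fun n x => ‖F n x - f x‖ₑ ^ p.toReal) (f := 0) (fun x => ‖2 * bound x‖ₑ ^ p.toReal)
      (fun n => ((hF n).sub hf).enorm.pow_const _) (fun n => ?_)
      (lintegral_rpow_enorm_lt_top_of_eLpNorm_lt_top hp0 hp
        (hbound.const_mul 2).eLpNorm_lt_top).ne ?_
    · simpa using h
    · filter_upwards [h_le n, hf_le] with x hFx hfx
      refine ENNReal.rpow_le_rpow (enorm_le_iff_norm_le.2 ?_) hr.le
      rw [Real.norm_eq_abs]
      linarith [norm_sub_le (F n x) (f x), le_abs_self (2 * bound x)]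
    · filter_upwards [hlim] with x hx
      have h := ((ENNReal.continuous_rpow_const (y := p.toReal)).tendsto _).comp
        (tendsto_sub_nhds_zero_iff.2 hx).enorm
      simpa [Function.comp_def, ENNReal.zero_rpow_of_pos hr] using h
  have h := ((ENNReal.continuous_rpow_const (y := 1 / p.toReal)).tendsto 0).comp hint
  simpa [eLpNorm_eq_lintegral_rpow_enorm_toReal hp0 hp, Function.comp_def,
    ENNReal.zero_rpow_of_pos (inv_pos.2 hr)] using h

theorem stmt_14_general (μ ν : Measure ℝ)
    (hμ : Integrable (fun x => (1 + |x|)⁻¹) μ)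
    (α : ℝ) (V : Lp ℝ 2 μ →L[ℝ] Lp ℝ 2 ν)
    (fn : ℕ → ℝ → ℝ) (f : ℝ → ℝ) (C : ℝ)
    (hfnμ : ∀ n, MemLp (fn n) 2 μ)
    (hfnC1 : ∀ n, ContDiff ℝ 1 (fn n))
    (hrepr : ∀ n, ∀ᵐ s ∂ν,
      (V ((hfnμ n).toLp (fn n)) : ℝ → ℝ) s
        = fn n s - α * ∫ t, (fn n s - fn n t) / (s - t) ∂μ)
    (haeμ : ∀ᵐ x ∂μ, Tendsto (fun n => fn n x) atTop (𝓝 (f x)))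
    (haeν : ∀ᵐ x ∂ν, Tendsto (fun n => fn n x) atTop (𝓝 (f x)))
    (hunif : ∀ n x, |fn n x| ≤ C / (1 + |x|))
    (hderiv : ∀ n x, |deriv (fn n) x| ≤ C) :
    ∃ hf : MemLp f 2 μ, ∀ᵐ s ∂ν,
      (V (hf.toLp f) : ℝ → ℝ) s = f s - α * ∫ t, (f s - f t) / (s - t) ∂μ := by
  have hlip : ∀ n a b, |fn n a - fn n b| ≤ C * |a - b| := fun n a b =>
    convex_univ.norm_image_sub_le_of_norm_deriv_le
      (fun x _ => (hfnC1 n).differentiable one_ne_zero x) (fun x _ => hderiv n x) trivial trivial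
  have hfn_meas : ∀ n, AEStronglyMeasurable (fn n) μ :=
    fun n => (hfnC1 n).continuous.aestronglyMeasurable
  have hf_decay : ∀ᵐ x ∂μ, |f x| ≤ C / (1 + |x|) := by
    filter_upwards [haeμ] with x hx
    exact le_of_tendsto hx.abs (Eventually.of_forall fun n => hunif n x)
  have hf : MemLp f 2 μ := memLp_two_of_abs_le_div_one_add_abs hμ
    (aestronglyMeasurable_of_tendsto_ae atTop hfn_meas haeμ) hf_decay
  refine ⟨hf, ?_⟩
  have : Fact ((1 : ℝ≥0∞) ≤ 2) := ⟨one_le_two⟩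
  have hLp : Tendsto (fun n => (hfnμ n).toLp (fn n)) atTop (𝓝 (hf.toLp f)) :=
    (Lp.tendsto_Lp_iff_tendsto_eLpNorm'' _ hfnμ f hf).2 <|
      tendsto_eLpNorm_sub_of_dominated ENNReal.ofNat_ne_top hfn_meas
        ((memLp_two_inv_one_add_abs hμ).const_mul C)
        (fun n => Eventually.of_forall fun x => by simpa [div_eq_mul_inv] using hunif n x) haeμ
  refine Lp.ae_eq_of_tendsto_of_tendsto_ae ((V.continuous.tendsto _).comp hLp) hrepr ?_
  filter_upwards [haeν] with s hs
  have hI : Tendsto (fun n => ∫ t, (fn n s - fn n t) / (s - t) ∂μ) atTop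
      (𝓝 (∫ t, (f s - f t) / (s - t) ∂μ)) := by
    refine tendsto_integral_of_dominated_convergence (fun t => 2 * C * (2 + |s|) / (1 + |t|))
      (fun n => (((hfnC1 n).continuous.measurable.const_sub _).div
        (measurable_id.const_sub s)).aestronglyMeasurable) (by simpa [div_eq_mul_inv] using hμ.const_mul (2 * C * (2 + |s|)))
      (fun n => Eventually.of_forall fun t => abs_sub_div_sub_le_of_decay (hlip n) (hunif n) s t)
      ?_
    filter_upwards [haeμ] with t ht
    exact (hs.sub ht).div_const _
  exact hs.sub (hI.const_mul α)

/-- Limiting lemma for the representation formula: if a bounded operator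
`V : L²(μ) → L²(ν)` satisfies `Vf(s) = f(s) - α∫ (f(s)-f(t))/(s-t) dμ(t)` on functions `f_n`
that converge a.e. to `f` with uniform bounds `|f_n(x)| ≤ C/(1+|x|)`, `|f_n'| ≤ C`, then
`f ∈ L²(μ)` and `Vf` is given by the same formula. -/
theorem stmt_14 (μ ν : Measure ℝ)
    (hμ : Integrable (fun x => (1 + |x|)⁻¹) μ)
    (hν : Integrable (fun x => ((1 + |x|) ^ 2)⁻¹) ν)
    (α : ℝ) (V : Lp ℝ 2 μ →L[ℝ] Lp ℝ 2 ν)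
    (fn : ℕ → ℝ → ℝ) (f : ℝ → ℝ) (C : ℝ)
    (hfnμ : ∀ n, MemLp (fn n) 2 μ) (hfnν : ∀ n, MemLp (fn n) 2 ν)
    (hfnC1 : ∀ n, ContDiff ℝ 1 (fn n))
    (hrepr : ∀ n, ∀ᵐ s ∂ν,
      (V ((hfnμ n).toLp (fn n)) : ℝ → ℝ) s
        = fn n s - α * ∫ t, (fn n s - fn n t) / (s - t) ∂μ)
    (haeμ : ∀ᵐ x ∂μ, Tendsto (fun n => fn n x) atTop (𝓝 (f x)))
    (haeν : ∀ᵐ x ∂ν, Tendsto (fun n => fn n x) atTop (𝓝 (f x)))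
    (hunif : ∀ n x, |fn n x| ≤ C / (1 + |x|))
    (hderiv : ∀ n x, |deriv (fn n) x| ≤ C) :
    ∃ hf : MemLp f 2 μ, ∀ᵐ s ∂ν,
      (V (hf.toLp f) : ℝ → ℝ) s = f s - α * ∫ t, (f s - f t) / (s - t) ∂μ :=
  stmt_14_general μ ν hμ α V fn f C hfnμ hfnC1 hrepr haeμ haeν hunif hderiv
end
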